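/- There exists a single computable predictor that learns to predict every binary sequence whose n-th symbol can eventually be computed within 2^n steps: there is a computable p : List Bool → Bool such that for every ω : ℕ → Bool, if there exists a code c : Nat.Partrec.Code with Encodable.encode (ω n) ∈ c.eval n for all n, and there exists r such that for all n > r, Nat.Partrec.Code.evaln (2 ^ n) c n = some (Encodable.encode (ω n)), then p learns to predict ω. -/

import Mathlib

/-!
Predict with the least-numbered code that, within `2 ^ n` steps, reproduces the history of
length `n` and halts on input `n`. A code that predicts wrongly at stage `n` is never consistent
with a later history, because its output at `n` is already fixed; so each code errs at most once.
The true code halts on every input, so from some stage on the budget `2 ^ n` also covers the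
finitely many inputs on which it is slower than `2 ^ i`, and it stays consistent. Hence the
chosen code never has a larger number, and once the finitely many codes below it have made their
single errors, every prediction is correct.
-/

/-- The length-`n` prefix `[ω 0, …, ω (n−1)]` of a binary sequence `ω`. -/
def prefixList (ω : ℕ → Bool) (n : ℕ) : List Bool := (List.range n).map ω

/-- A predictor `p` learns to predict the sequence `ω` if from some point on it
always predicts the next symbol correctly. -/
def LearnsToPredict (p : List Bool → Bool) (ω : ℕ → Bool) : Prop :=
  ∃ m : ℕ, ∀ n ≥ m, p (prefixList ω n) = ω n

open Nat.Partrec (Code)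
open Nat.Partrec.Code Filter Encodable

def fits (l : List Bool) (c : Code) : Bool :=
  decide ((List.range l.length).map (evaln (2 ^ l.length) c) = l.map (some ∘ encode))
    && (evaln (2 ^ l.length) c l.length).isSome

def leastFit (l : List Bool) : ℕ :=
  (List.range (l.length + 1)).findIdx fun k => fits l (Denumerable.ofNat Code k)

def predictor (l : List Bool) : Bool :=
  decide (evaln (2 ^ l.length) (Denumerable.ofNat Code (leastFit l)) l.length = some 1)

theorem primrec_two_pow : Primrec (2 ^ · : ℕ → ℕ) :=
  (Primrec₂.unpaired'.mp Nat.Primrec.pow).comp (Primrec.const 2) Primrec.id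

theorem primrec₂_evaln_two_pow_length :
    Primrec₂ fun (p : List Bool × Code) (i : ℕ) => evaln (2 ^ p.1.length) p.2 i :=
  primrec_evaln.comp
    (((primrec_two_pow.comp (Primrec.list_length.comp (Primrec.fst.comp Primrec.fst))).pair
      (Primrec.snd.comp Primrec.fst)).pair Primrec.snd)

theorem primrec₂_fits : Primrec₂ fits := by
  have hrun : Primrec fun p : List Bool × Code =>
      (List.range p.1.length).map (evaln (2 ^ p.1.length) p.2) :=
    Primrec.list_map (Primrec.list_range.comp (Primrec.list_length.comp Primrec.fst))
      primrec₂_evaln_two_pow_length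
  have hhist : Primrec fun p : List Bool × Code => p.1.map (some ∘ encode) :=
    Primrec.list_map Primrec.fst ((Primrec.option_some.comp Primrec.encode).comp₂ Primrec₂.right)
  have hhalt : Primrec fun p : List Bool × Code => (evaln (2 ^ p.1.length) p.2 p.1.length).isSome :=
    Primrec.option_isSome.comp
      (primrec₂_evaln_two_pow_length.comp Primrec.id (Primrec.list_length.comp Primrec.fst))
  exact Primrec.and.comp (Primrec.eq.comp hrun hhist).decide hhalt

theorem primrec_leastFit : Primrec leastFit :=
  Primrec.list_findIdx (Primrec.list_range.comp (Primrec.succ.comp Primrec.list_length))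
    (primrec₂_fits.comp Primrec.fst ((Primrec.ofNat Code).comp Primrec.snd))

theorem primrec_predictor : Primrec predictor :=
  (Primrec.eq.comp
    (primrec₂_evaln_two_pow_length.comp
      (Primrec.id.pair ((Primrec.ofNat Code).comp primrec_leastFit)) Primrec.list_length)
    (Primrec.const (some 1))).decide

theorem List.findIdx_range_le_and {p : ℕ → Bool} {m k : ℕ} (hk : k < m) (hpk : p k) :
    (List.range m).findIdx p ≤ k ∧ p ((List.range m).findIdx p) := by
  have hlt : (List.range m).findIdx p < (List.range m).length :=
    List.findIdx_lt_length.mpr ⟨k, List.mem_range.mpr hk, hpk⟩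
  refine ⟨?_, by simpa using List.findIdx_getElem (w := hlt)⟩
  by_contra! hgt
  simpa [hpk] using List.not_of_lt_findIdx hgt

theorem leastFit_le_and_fits {l : List Bool} {k : ℕ} (hk : k ≤ l.length)
    (hfit : fits l (Denumerable.ofNat Code k)) :
    leastFit l ≤ k ∧ fits l (Denumerable.ofNat Code (leastFit l)) :=
  List.findIdx_range_le_and (Nat.lt_succ_of_le hk) hfit

theorem predictor_eq {l : List Bool} {b : Bool}
    (h : evaln (2 ^ l.length) (Denumerable.ofNat Code (leastFit l)) l.length = some (encode b)) :
    predictor l = b := by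
  cases b <;> simp [predictor, h]

@[simp]
theorem prefixList_length (ω : ℕ → Bool) (n : ℕ) : (prefixList ω n).length = n := by
  simp [prefixList]

theorem fits_prefixList_iff {ω : ℕ → Bool} {n : ℕ} {c : Code} :
    fits (prefixList ω n) c ↔
      (∀ i < n, evaln (2 ^ n) c i = some (encode (ω i))) ∧ (evaln (2 ^ n) c n).isSome := by
  rw [fits, prefixList_length, Bool.and_eq_true, decide_eq_true_iff, prefixList, List.map_map,
    List.map_eq_map_iff]
  simp only [List.mem_range, Function.comp_apply]

theorem not_fits_of_mispredicts {ω : ℕ → Bool} {c : Code} {n n' : ℕ} (hn : n < n')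
    (hfit : fits (prefixList ω n) c) (hwrong : evaln (2 ^ n) c n ≠ some (encode (ω n))) :
    ¬ fits (prefixList ω n') c := by
  intro hfit'
  obtain ⟨v, hv⟩ := Option.isSome_iff_exists.mp (fits_prefixList_iff.mp hfit).2
  have hlater := (fits_prefixList_iff.mp hfit').1 n hn
  rw [evaln_mono (Nat.pow_le_pow_right two_pos hn.le) hv] at hlater
  exact hwrong (hv.trans hlater)

theorem eventually_predicts_of_fits (ω : ℕ → Bool) (c : Code) :
    ∀ᶠ n in atTop, fits (prefixList ω n) c → evaln (2 ^ n) c n = some (encode (ω n)) := by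
  by_cases h : ∃ n₀, fits (prefixList ω n₀) c ∧ evaln (2 ^ n₀) c n₀ ≠ some (encode (ω n₀))
  · obtain ⟨n₀, hfit, hwrong⟩ := h
    filter_upwards [eventually_gt_atTop n₀] with n hn hfit'
    exact absurd hfit' (not_fits_of_mispredicts hn hfit hwrong)
  · push Not at h
    exact Eventually.of_forall h

theorem eventually_fits {ω : ℕ → Bool} {c : Code} {r : ℕ}
    (hc : ∀ n, encode (ω n) ∈ c.eval n)
    (hr : ∀ n > r, evaln (2 ^ n) c n = some (encode (ω n))) :
    ∀ᶠ n in atTop, fits (prefixList ω n) c := by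
  have hearly : ∀ᶠ n in atTop, ∀ i ∈ Set.Iic r, evaln (2 ^ n) c i = some (encode (ω i)) := by
    refine (eventually_all_finite (Set.finite_Iic r)).2 fun i _ => ?_
    obtain ⟨t, ht⟩ := evaln_complete.mp (hc i)
    filter_upwards [eventually_ge_atTop t] with n hn
    exact evaln_mono (hn.trans Nat.lt_two_pow_self.le) ht
  have hall : ∀ᶠ n in atTop, ∀ i ≤ n, evaln (2 ^ n) c i = some (encode (ω i)) := by
    filter_upwards [hearly] with n hearly i hi
    rcases le_or_gt i r with hir | hir
    · exact hearly i hir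
    · exact evaln_mono (Nat.pow_le_pow_right two_pos hi) (hr i hir)
  filter_upwards [hall] with n hall
  rw [fits_prefixList_iff, hall n le_rfl]
  exact ⟨fun i hi => hall i hi.le, rfl⟩

/-- A single computable predictor learns every binary sequence whose `n`-th
symbol can eventually be computed within `2 ^ n` steps. -/
theorem stmt_10 :
    ∃ p : List Bool → Bool, Computable p ∧
      ∀ ω : ℕ → Bool,
        (∃ c : Nat.Partrec.Code,
            (∀ n : ℕ, Encodable.encode (ω n) ∈ c.eval n) ∧
            ∃ r : ℕ, ∀ n > r,
              Nat.Partrec.Code.evaln (2 ^ n) c n =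
                some (Encodable.encode (ω n))) →
        LearnsToPredict p ω := by
  refine ⟨predictor, primrec_predictor.to_comp, ?_⟩
  rintro ω ⟨c, hc, r, hr⟩
  have hbelow : ∀ᶠ n in atTop, ∀ k ∈ Set.Iic (encode c),
      fits (prefixList ω n) (Denumerable.ofNat Code k) →
        evaln (2 ^ n) (Denumerable.ofNat Code k) n = some (encode (ω n)) :=
    (eventually_all_finite (Set.finite_Iic _)).2 fun k _ => eventually_predicts_of_fits ω _
  refine eventually_atTop.mp ?_
  filter_upwards [eventually_fits hc hr, hbelow, eventually_ge_atTop (encode c)]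
    with n hfit hbelow hn
  obtain ⟨hle, hleast⟩ := leastFit_le_and_fits (l := prefixList ω n) (k := encode c)
    (by simpa using hn) (by simpa using hfit)
  exact predictor_eq (by simpa using hbelow _ hle hleast)
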